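/- Let $c_*, T, \gamma, \alpha > 0$ and suppose $\int_0^T A^2(t)\,dt \leq \frac{c_*}{4} T$, $\int_0^T G^2(t)\,dt \leq \alpha \gamma$, and $\alpha \exp\left(\frac{c_*}{4}T\right) + \exp\left(-\frac{c_*}{4}T\right) \leq 1$. If $X : [0,T] \to [0,\infty)$ is differentiable with $X^2(0) \leq \gamma$ and satisfies $\frac{d}{dt}X^2 + \frac{c_*}{2}X^2 \leq A^2(t) X^2 + G^2(t)$ on $[0,T]$, then $X^2(T) \leq \gamma$. -/

import Mathlib

/-!
Gronwall's inequality in integrating-factor form. With `k = A2 - c⋆/2` and `K t = ∫₀ᵗ k`, the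
function `e^{-K} X² - ∫₀ᵗ e^{-K} G2` is nonincreasing, so
`X²(T) ≤ e^{K T} (X²(0) + e^{c⋆T/2} ∫₀ᵀ G2)`, using `-K ≤ c⋆T/2` (as `A2 ≥ 0`).
The bound on `∫ A2` gives `K T ≤ -c⋆T/4`, hence `X²(T) ≤ γ (e^{-c⋆T/4} + α e^{c⋆T/4}) ≤ γ`.
-/

open Set Real intervalIntegral

section Primitive

variable {k : ℝ → ℝ} {a b : ℝ}

lemma ContinuousOn.continuousOn_primitive_Icc (hab : a ≤ b) (hk : ContinuousOn k (Icc a b)) :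
    ContinuousOn (fun u => ∫ s in a..u, k s) (Icc a b) := by
  rw [← uIcc_of_le hab] at hk ⊢
  exact continuousOn_primitive_interval hk.integrableOn_uIcc

lemma ContinuousOn.hasDerivAt_primitive_Icc (hk : ContinuousOn k (Icc a b)) {t : ℝ}
    (ht : t ∈ Ioo a b) : HasDerivAt (fun u => ∫ s in a..u, k s) (k t) t :=
  integral_hasDerivAt_right
    ((hk.mono (Icc_subset_Icc_right ht.2.le)).intervalIntegrable_of_Icc ht.1.le)
    ((hk.mono Ioo_subset_Icc_self).stronglyMeasurableAtFilter isOpen_Ioo t ht)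
    ((hk t (Ioo_subset_Icc_self ht)).continuousAt (Icc_mem_nhds ht.1 ht.2))

end Primitive

theorem le_exp_integral_mul_of_deriv_le {f f' k g : ℝ → ℝ} {a b : ℝ} (hab : a ≤ b)
    (hf : ContinuousOn f (Icc a b)) (hf' : ∀ t ∈ Ioo a b, HasDerivAt f (f' t) t)
    (hk : ContinuousOn k (Icc a b)) (hg : ContinuousOn g (Icc a b))
    (hle : ∀ t ∈ Ioo a b, f' t ≤ k t * f t + g t) :
    f b ≤ exp (∫ s in a..b, k s) * (f a + ∫ s in a..b, exp (-∫ r in a..s, k r) * g s) := by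
  set K : ℝ → ℝ := fun u => ∫ s in a..u, k s with hK
  have hE : ContinuousOn (fun u => exp (-K u)) (Icc a b) :=
    (hk.continuousOn_primitive_Icc hab).neg.rexp
  have hEg : ContinuousOn (fun s => exp (-K s) * g s) (Icc a b) := hE.mul hg
  have hanti : AntitoneOn (fun u => exp (-K u) * f u - ∫ s in a..u, exp (-K s) * g s)
      (Icc a b) := by
    refine antitoneOn_of_hasDerivWithinAt_nonpos (convex_Icc a b)
      ((hE.mul hf).sub (hEg.continuousOn_primitive_Icc hab)) (fun t ht => ?_) (fun t ht => ?_)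
      (f' := fun t => exp (-K t) * (f' t - k t * f t - g t))
    · rw [interior_Icc] at ht
      have hE' : HasDerivAt (fun u => exp (-K u)) (exp (-K t) * -k t) t :=
        (hk.hasDerivAt_primitive_Icc ht).neg.exp
      exact ((hE'.mul (hf' t ht)).sub (hEg.hasDerivAt_primitive_Icc ht)).hasDerivWithinAt.congr_deriv
        (by ring)
    · rw [interior_Icc] at ht
      exact mul_nonpos_of_nonneg_of_nonpos (exp_pos _).le (by linarith [hle t ht])
  have hba := hanti (left_mem_Icc.2 hab) (right_mem_Icc.2 hab) hab
  simp only [hK, integral_same, neg_zero, exp_zero, one_mul, sub_zero] at hba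
  calc f b = exp (K b) * (exp (-K b) * f b) := by rw [← mul_assoc, ← exp_add]; simp
    _ ≤ _ := mul_le_mul_of_nonneg_left (by linarith) (exp_pos _).le

theorem le_exp_integral_mul_add_exp_mul_of_deriv_le {f f' k g : ℝ → ℝ} {a b M : ℝ}
    (hab : a ≤ b)
    (hf : ContinuousOn f (Icc a b)) (hf' : ∀ t ∈ Ioo a b, HasDerivAt f (f' t) t)
    (hk : ContinuousOn k (Icc a b)) (hg : ContinuousOn g (Icc a b))
    (hle : ∀ t ∈ Ioo a b, f' t ≤ k t * f t + g t) (hg₀ : ∀ t ∈ Icc a b, 0 ≤ g t)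
    (hkM : ∀ t ∈ Icc a b, -M ≤ ∫ s in a..t, k s) :
    f b ≤ exp (∫ s in a..b, k s) * (f a + exp M * ∫ s in a..b, g s) := by
  refine (le_exp_integral_mul_of_deriv_le hab hf hf' hk hg hle).trans
    (mul_le_mul_of_nonneg_left (add_le_add_right ?_ _) (exp_pos _).le)
  rw [← integral_const_mul]
  refine integral_mono_on hab
    (((hk.continuousOn_primitive_Icc hab).neg.rexp.mul hg).intervalIntegrable_of_Icc hab)
    ((continuousOn_const.mul hg).intervalIntegrable_of_Icc hab) fun t ht => ?_
  exact mul_le_mul_of_nonneg_right (exp_le_exp.2 (by linarith [hkM t ht])) (hg₀ t ht)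

theorem stmt_14_general (cstar T γ α : ℝ) (hc : 0 < cstar) (hT : 0 < T) (hγ : 0 < γ)
    (X X' A2 G2 : ℝ → ℝ)
    (hX : ∀ t ∈ Set.Icc (0 : ℝ) T,
      HasDerivWithinAt (fun s => X s ^ 2) (X' t) (Set.Icc (0 : ℝ) T) t)
    (hA2cont : ContinuousOn A2 (Set.Icc (0 : ℝ) T))
    (hA2nn : ∀ t ∈ Set.Icc (0 : ℝ) T, 0 ≤ A2 t)
    (hG2cont : ContinuousOn G2 (Set.Icc (0 : ℝ) T))
    (hG2nn : ∀ t ∈ Set.Icc (0 : ℝ) T, 0 ≤ G2 t)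
    (hA2int : ∫ t in (0:ℝ)..T, A2 t ≤ cstar / 4 * T)
    (hG2int : ∫ t in (0:ℝ)..T, G2 t ≤ α * γ)
    (hsmall : α * Real.exp (cstar / 4 * T) + Real.exp (-(cstar / 4) * T) ≤ 1)
    (hinit : X 0 ^ 2 ≤ γ)
    (hineq : ∀ t ∈ Set.Icc (0 : ℝ) T, X' t + cstar / 2 * X t ^ 2 ≤ A2 t * X t ^ 2 + G2 t) :
    X T ^ 2 ≤ γ := by
  have hprimitive : ∀ t ∈ Icc 0 T,
      ∫ s in (0:ℝ)..t, (A2 s - cstar / 2) = (∫ s in (0:ℝ)..t, A2 s) - cstar / 2 * t := by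
    intro t ht
    rw [integral_sub ((hA2cont.mono (Icc_subset_Icc_right ht.2)).intervalIntegrable_of_Icc ht.1)
      intervalIntegrable_const, integral_const, smul_eq_mul, sub_zero, mul_comm]
  have hlower : ∀ t ∈ Icc 0 T, -(cstar / 2 * T) ≤ ∫ s in (0:ℝ)..t, (A2 s - cstar / 2) := by
    intro t ht
    have hA2t : 0 ≤ ∫ s in (0:ℝ)..t, A2 s :=
      integral_nonneg ht.1 fun s hs => hA2nn s ⟨hs.1, hs.2.trans ht.2⟩
    rw [hprimitive t ht]
    nlinarith [ht.2]
  have hgronwall :=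
    le_exp_integral_mul_add_exp_mul_of_deriv_le (k := fun s => A2 s - cstar / 2) hT.le
      (fun t ht => (hX t ht).continuousWithinAt)
      (fun t ht => (hX t (Ioo_subset_Icc_self ht)).hasDerivAt (Icc_mem_nhds ht.1 ht.2))
      (hA2cont.sub continuousOn_const) hG2cont
      (fun t ht => by linarith [hineq t (Ioo_subset_Icc_self ht)]) hG2nn hlower
  have hdecay : ∫ s in (0:ℝ)..T, (A2 s - cstar / 2) ≤ -(cstar / 4) * T := by
    rw [hprimitive T (right_mem_Icc.2 hT.le)]
    linarith
  have hexp : exp (-(cstar / 4) * T) * exp (cstar / 2 * T) = exp (cstar / 4 * T) := by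
    rw [← exp_add]
    ring_nf
  calc X T ^ 2 ≤ exp (-(cstar / 4) * T) * (γ + exp (cstar / 2 * T) * (α * γ)) :=
        hgronwall.trans <| mul_le_mul (exp_le_exp.2 hdecay)
          (add_le_add hinit (mul_le_mul_of_nonneg_left hG2int (exp_pos _).le))
          (add_nonneg (sq_nonneg _) (mul_nonneg (exp_pos _).le
            (integral_nonneg hT.le hG2nn))) (exp_pos _).le
    _ = γ * (α * exp (cstar / 4 * T) + exp (-(cstar / 4) * T)) := by
        linear_combination α * γ * hexp
    _ ≤ γ := mul_le_of_le_one_right hγ.le hsmall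

theorem stmt_14 (cstar T γ α : ℝ) (hc : 0 < cstar) (hT : 0 < T) (hγ : 0 < γ) (hα : 0 < α)
    (X X' A2 G2 : ℝ → ℝ)
    (hX : ∀ t ∈ Set.Icc (0 : ℝ) T,
      HasDerivWithinAt (fun s => X s ^ 2) (X' t) (Set.Icc (0 : ℝ) T) t)
    (hXnn : ∀ t ∈ Set.Icc (0 : ℝ) T, 0 ≤ X t)
    (hA2cont : ContinuousOn A2 (Set.Icc (0 : ℝ) T))
    (hA2nn : ∀ t ∈ Set.Icc (0 : ℝ) T, 0 ≤ A2 t)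
    (hG2cont : ContinuousOn G2 (Set.Icc (0 : ℝ) T))
    (hG2nn : ∀ t ∈ Set.Icc (0 : ℝ) T, 0 ≤ G2 t)
    (hA2int : ∫ t in (0:ℝ)..T, A2 t ≤ cstar / 4 * T)
    (hG2int : ∫ t in (0:ℝ)..T, G2 t ≤ α * γ)
    (hsmall : α * Real.exp (cstar / 4 * T) + Real.exp (-(cstar / 4) * T) ≤ 1)
    (hinit : X 0 ^ 2 ≤ γ)
    (hineq : ∀ t ∈ Set.Icc (0 : ℝ) T, X' t + cstar / 2 * X t ^ 2 ≤ A2 t * X t ^ 2 + G2 t) :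
    X T ^ 2 ≤ γ :=
  stmt_14_general cstar T γ α hc hT hγ X X' A2 G2 hX hA2cont hA2nn hG2cont hG2nn hA2int hG2int
    hsmall hinit hineq
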